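/- The supremal p-negative type of a finite metric space cannot be strict: if (X,d) is a finite metric space and ℘ = sup{p ≥ 0 : (X,d) has p-negative type} is finite, then (X,d) does not have strict ℘-negative type. -/
import Mathlib

set_option maxHeartbeats 1000000

open scoped BigOperators

/-- The kernel `d(x,y)^p`, with the convention that it vanishes on the diagonal
(this matters only when `p = 0`). -/
noncomputable def negKer {X : Type*} [MetricSpace X] (p : ℝ) (x y : X) : ℝ :=
  @ite ℝ (x = y) (Classical.dec _) 0 (dist x y ^ p)

/-- `(X,d)` has `p`-negative type: for all `k ≥ 2`, pairwise distinct points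
`x₁,…,x_k` and reals `η₁,…,η_k` summing to zero,
`∑_{i,j} d(xᵢ,xⱼ)^p ηᵢ ηⱼ ≤ 0`. -/
def HasNegType (X : Type*) [MetricSpace X] (p : ℝ) : Prop :=
  ∀ (k : ℕ), 2 ≤ k → ∀ (x : Fin k → X), Function.Injective x →
    ∀ (η : Fin k → ℝ), (∑ i, η i) = 0 →
      (∑ i, ∑ j, negKer p (x i) (x j) * η i * η j) ≤ 0

/-- `(X,d)` has strict `p`-negative type: `p`-negative type, with strict
inequality whenever `η ≠ 0`. -/
def HasStrictNegType (X : Type*) [MetricSpace X] (p : ℝ) : Prop :=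
  HasNegType X p ∧
  ∀ (k : ℕ), 2 ≤ k → ∀ (x : Fin k → X), Function.Injective x →
    ∀ (η : Fin k → ℝ), (∑ i, η i) = 0 → η ≠ 0 →
      (∑ i, ∑ j, negKer p (x i) (x j) * η i * η j) < 0

section Aux

lemma negKer_self {X : Type*} [MetricSpace X] (p : ℝ) (x : X) : negKer p x x = 0 := by
  unfold negKer; exact if_pos rfl

lemma negKer_ne {X : Type*} [MetricSpace X] (p : ℝ) {x y : X} (h : x ≠ y) :
    negKer p x y = dist x y ^ p := by
  unfold negKer; exact if_neg h

lemma quad_homog {n : ℕ} (A : Fin n → Fin n → ℝ) (c : ℝ) (η : Fin n → ℝ) :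
    (∑ i, ∑ j, A i j * (c * η i) * (c * η j)) =
      c ^ 2 * ∑ i, ∑ j, A i j * η i * η j := by
  rw [Finset.mul_sum]
  refine Finset.sum_congr rfl fun i _ => ?_
  rw [Finset.mul_sum]
  exact Finset.sum_congr rfl fun j _ => by ring

/-- Every metric space has 0-negative type. -/
lemma hasNegType_zero (X : Type*) [MetricSpace X] : HasNegType X 0 := by
  classical
  intro k hk x hx η hsum
  have hker : ∀ i j : Fin k, negKer 0 (x i) (x j) * η i * η j
      = η i * η j - (if i = j then η i * η j else 0) := by
    intro i j
    by_cases h : i = j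
    · subst h; rw [negKer_self]; simp
    · rw [negKer_ne 0 (fun hxy => h (hx hxy)), if_neg h, Real.rpow_zero]; ring
  have key : (∑ i, ∑ j, negKer 0 (x i) (x j) * η i * η j)
      = (∑ i, η i) * (∑ j, η j) - ∑ i, η i * η i := by
    simp only [hker, Finset.sum_sub_distrib]
    congr 1
    · rw [Finset.sum_mul_sum]
    · refine Finset.sum_congr rfl fun i _ => ?_
      simp [Finset.sum_ite_eq]
  rw [key, hsum]
  simp only [zero_mul, zero_sub, neg_nonpos]
  exact Finset.sum_nonneg fun i _ => mul_self_nonneg _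

end Aux

section Reduce

variable {X : Type*} [MetricSpace X] [Fintype X]

open Finset in
/-- Negative type follows from the single inequality for a full enumeration. -/
lemma hasNegType_of_equiv (p : ℝ) (e : Fin (Fintype.card X) ≃ X)
    (h : ∀ η : Fin (Fintype.card X) → ℝ, (∑ i, η i) = 0 →
      (∑ i, ∑ j, negKer p (e i) (e j) * η i * η j) ≤ 0) :
    HasNegType X p := by
  classical
  intro k hk x hx η hsum
  set ι : Fin k → Fin (Fintype.card X) := fun j => e.symm (x j) with hι
  have hιinj : Function.Injective ι := fun a b hab => by
    apply hx
    have := congrArg e hab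
    simpa [hι] using this
  set η' : Fin (Fintype.card X) → ℝ :=
    fun i => ∑ j ∈ univ.filter (fun j => ι j = i), η j with hη'
  have hη'ι : ∀ a : Fin k, η' (ι a) = η a := by
    intro a
    have : univ.filter (fun j => ι j = ι a) = {a} := by
      ext b; simp [hιinj.eq_iff]
    simp [hη', this]
  have hη'zero : ∀ i, i ∉ univ.image ι → η' i = 0 := by
    intro i hi
    have : univ.filter (fun j => ι j = i) = ∅ := by
      ext b
      simp only [mem_filter, mem_univ, true_and, Finset.notMem_empty, iff_false]
      intro hb
      exact hi (mem_image.2 ⟨b, mem_univ b, hb⟩)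
    simp [hη', this]
  have hsum' : (∑ i, η' i) = 0 := by
    rw [hη', Finset.sum_fiberwise univ ι η] at *
    exact hsum
  have key : (∑ i, ∑ j, negKer p (e i) (e j) * η' i * η' j)
      = ∑ a, ∑ b, negKer p (x a) (x b) * η a * η b := by
    have h1 : (∑ i, ∑ j, negKer p (e i) (e j) * η' i * η' j)
        = ∑ i ∈ univ.image ι, ∑ j ∈ univ.image ι,
            negKer p (e i) (e j) * η' i * η' j := by
      rw [← Finset.sum_subset (Finset.subset_univ (univ.image ι))]
      · refine Finset.sum_congr rfl fun i _ => ?_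
        rw [← Finset.sum_subset (Finset.subset_univ (univ.image ι))]
        intro j _ hj
        rw [hη'zero j hj]; ring
      · intro i _ hi
        rw [hη'zero i hi]
        simp
    rw [h1, Finset.sum_image (fun a _ b _ hab => hιinj hab)]
    refine Finset.sum_congr rfl fun a _ => ?_
    rw [Finset.sum_image (fun a _ b _ hab => hιinj hab)]
    refine Finset.sum_congr rfl fun b _ => ?_
    rw [hη'ι, hη'ι]
    simp [hι]
  calc (∑ a, ∑ b, negKer p (x a) (x b) * η a * η b)
      = ∑ i, ∑ j, negKer p (e i) (e j) * η' i * η' j := key.symm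
    _ ≤ 0 := h η' hsum'

end Reduce

section Openness

open Filter Topology

/-- The key "openness" lemma: strict negative type of the full quadratic form
at exponent `p` gives negative type at some exponent `q > p`. -/
lemma openness {n : ℕ} (d : Fin n → Fin n → ℝ) (hd : ∀ i j, i ≠ j → 0 < d i j)
    (p : ℝ)
    (hstrict : ∀ η : Fin n → ℝ, (∑ i, η i) = 0 → η ≠ 0 →
      (∑ i, ∑ j, (if i = j then (0:ℝ) else d i j ^ p) * η i * η j) < 0) :
    ∃ q, p < q ∧ ∀ η : Fin n → ℝ, (∑ i, η i) = 0 →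
      (∑ i, ∑ j, (if i = j then (0:ℝ) else d i j ^ q) * η i * η j) ≤ 0 := by
  classical
  set A : ℝ → Fin n → Fin n → ℝ := fun q i j => if i = j then (0:ℝ) else d i j ^ q
    with hA
  set Q : ℝ → (Fin n → ℝ) → ℝ := fun q η => ∑ i, ∑ j, A q i j * η i * η j with hQ
  -- reduce to the "sphere" K
  set K : Set (Fin n → ℝ) := {η | (∑ i, η i) = 0 ∧ ‖η‖ = 1} with hK
  have hreduce : ∀ q : ℝ, (∀ η ∈ K, Q q η ≤ 0) →
      ∀ η : Fin n → ℝ, (∑ i, η i) = 0 → Q q η ≤ 0 := by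
    intro q hq η hsum
    by_cases h0 : η = 0
    · simp [hQ, h0]
    · have hnorm : 0 < ‖η‖ := norm_pos_iff.2 h0
      set ν : Fin n → ℝ := ‖η‖⁻¹ • η with hν
      have hνK : ν ∈ K := by
        constructor
        · simp only [hν, Pi.smul_apply, smul_eq_mul, ← Finset.mul_sum, hsum, mul_zero]
        · rw [hν, norm_smul]
          simp [abs_of_pos (inv_pos.2 hnorm), inv_mul_cancel₀ hnorm.ne']
      have hQν := hq ν hνK
      have hhom : Q q ν = (‖η‖⁻¹) ^ 2 * Q q η := by
        simp only [hQ, hν, Pi.smul_apply, smul_eq_mul]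
        exact quad_homog (A q) (‖η‖⁻¹) η
      have h2 : (0:ℝ) < (‖η‖⁻¹) ^ 2 := by positivity
      nlinarith [hQν, hhom]
  by_cases hKne : K.Nonempty
  · -- K is compact
    have hKcl : IsClosed K := by
      apply IsClosed.inter
      · exact isClosed_eq (continuous_finset_sum _ fun i _ => continuous_apply i)
          continuous_const
      · exact isClosed_eq continuous_norm continuous_const
    have hKbdd : Bornology.IsBounded K := by
      apply Bornology.IsBounded.subset
        (Metric.isBounded_closedBall (x := (0 : Fin n → ℝ)) (r := 1))
      intro η hη
      simp only [Metric.mem_closedBall, dist_zero_right]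
      exact le_of_eq hη.2
    have hKcomp : IsCompact K := Metric.isCompact_of_isClosed_isBounded hKcl hKbdd
    have hQcont : Continuous (Q p) := by
      apply continuous_finset_sum
      intro i _
      apply continuous_finset_sum
      intro j _
      exact (continuous_const.mul (continuous_apply i)).mul (continuous_apply j)
    obtain ⟨η₀, hη₀K, hmax⟩ := hKcomp.exists_isMaxOn hKne hQcont.continuousOn
    have hη₀ne : η₀ ≠ 0 := by
      intro h
      rw [h] at hη₀K
      have := hη₀K.2
      simp at this
    set δ : ℝ := -Q p η₀ with hδ
    have hδpos : 0 < δ := by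
      have := hstrict η₀ hη₀K.1 hη₀ne
      rw [hδ, hQ]
      linarith [this]
    -- the error functional
    set G : ℝ → ℝ := fun q => ∑ i, ∑ j, |A q i j - A p i j| with hG
    have hGp : G p = 0 := by simp [hG]
    have hGcont : Continuous G := by
      apply continuous_finset_sum
      intro i _
      apply continuous_finset_sum
      intro j _
      apply Continuous.abs
      apply Continuous.sub _ continuous_const
      by_cases h : i = j
      · simp only [hA, if_pos h]; exact continuous_const
      · simp only [hA, if_neg h]
        rw [continuous_iff_continuousAt]
        intro q
        exact Real.continuousAt_const_rpow (hd i j h).ne'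
    have htend : Filter.Tendsto G (𝓝 p) (𝓝 0) := by
      have := hGcont.continuousAt (x := p)
      rwa [ContinuousAt, hGp] at this
    have hev : ∀ᶠ q in 𝓝 p, G q < δ := htend.eventually_lt_const hδpos
    obtain ⟨ε, hεpos, hball⟩ := Metric.eventually_nhds_iff.1 hev
    refine ⟨p + ε / 2, by linarith, ?_⟩
    apply hreduce
    intro η hηK
    have hGq : G (p + ε / 2) < δ := by
      apply hball
      simp only [Real.dist_eq, add_sub_cancel_left]
      rw [abs_of_pos (by linarith)]
      linarith
    have hQp : Q p η ≤ -δ := by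
      have h := hmax hηK
      rw [hδ, neg_neg]
      exact h
    have hdiff : Q (p + ε / 2) η - Q p η ≤ G (p + ε / 2) := by
      have h1 : Q (p + ε / 2) η - Q p η
          = ∑ i, ∑ j, (A (p + ε / 2) i j - A p i j) * η i * η j := by
        simp only [hQ, ← Finset.sum_sub_distrib]
        refine Finset.sum_congr rfl fun i _ => Finset.sum_congr rfl fun j _ => by ring
      rw [h1, hG]
      have habs : ∀ i : Fin n, |η i| ≤ 1 := by
        intro i
        have := norm_le_pi_norm η i
        rw [hηK.2] at this
        simpa using this
      refine Finset.sum_le_sum fun i _ => Finset.sum_le_sum fun j _ => ?_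
      calc (A (p + ε / 2) i j - A p i j) * η i * η j
          ≤ |(A (p + ε / 2) i j - A p i j) * η i * η j| := le_abs_self _
        _ = |A (p + ε / 2) i j - A p i j| * |η i| * |η j| := by
            rw [abs_mul, abs_mul]
        _ ≤ |A (p + ε / 2) i j - A p i j| * 1 * 1 := by
            apply mul_le_mul (mul_le_mul le_rfl (habs i) (abs_nonneg _)
              (abs_nonneg _)) (habs j) (abs_nonneg _)
            positivity
        _ = |A (p + ε / 2) i j - A p i j| := by ring
    linarith
  · -- K empty: every η with sum 0 must be 0
    refine ⟨p + 1, by linarith, ?_⟩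
    apply hreduce
    intro η hηK
    exact absurd ⟨η, hηK⟩ hKne

end Openness

/-- The supremal `p`-negative type of a finite metric space cannot be strict. -/
theorem supremal_negType_not_strict {X : Type*} [MetricSpace X] [Fintype X]
    (hbdd : BddAbove {p : ℝ | 0 ≤ p ∧ HasNegType X p}) :
    ¬ HasStrictNegType X (sSup {p : ℝ | 0 ≤ p ∧ HasNegType X p}) := by
  classical
  set S : Set ℝ := {p : ℝ | 0 ≤ p ∧ HasNegType X p} with hS
  have h0S : (0:ℝ) ∈ S := ⟨le_rfl, hasNegType_zero X⟩
  set P : ℝ := sSup S with hP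
  have hPmem : ∀ q ∈ S, q ≤ P := fun q hq => le_csSup hbdd hq
  have hP0 : 0 ≤ P := hPmem 0 h0S
  intro hstrict
  have hn2 : 2 ≤ Fintype.card X := by
    by_contra hlt
    push_neg at hlt
    have hall : HasNegType X (P + 1) := by
      intro k hk x hx η hsum
      exfalso
      have : k ≤ Fintype.card X := by
        have := Fintype.card_le_of_injective x hx
        simpa using this
      omega
    have : P + 1 ≤ P := hPmem (P + 1) ⟨by linarith, hall⟩
    linarith
  set e : Fin (Fintype.card X) ≃ X := (Fintype.equivFin X).symm with he
  set d : Fin (Fintype.card X) → Fin (Fintype.card X) → ℝ :=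
    fun i j => dist (e i) (e j) with hd
  have hdpos : ∀ i j, i ≠ j → 0 < d i j := by
    intro i j hij
    exact dist_pos.2 (fun h => hij (e.injective h))
  have hker : ∀ (q : ℝ) (i j : Fin (Fintype.card X)),
      negKer q (e i) (e j) = if i = j then 0 else d i j ^ q := by
    intro q i j
    by_cases h : i = j
    · subst h; rw [negKer_self, if_pos rfl]
    · rw [negKer_ne q (fun hxy => h (e.injective hxy)), if_neg h]
  have hstrict' : ∀ η : Fin (Fintype.card X) → ℝ, (∑ i, η i) = 0 → η ≠ 0 →
      (∑ i, ∑ j, (if i = j then (0:ℝ) else d i j ^ P) * η i * η j) < 0 := by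
    intro η hsum hne
    have := hstrict.2 (Fintype.card X) hn2 e e.injective η hsum hne
    simpa only [hker] using this
  obtain ⟨q, hq, hqneg⟩ := openness d hdpos P hstrict'
  have hqS : q ∈ S := by
    refine ⟨by linarith, ?_⟩
    apply hasNegType_of_equiv q e
    intro η hsum
    simpa only [hker] using hqneg η hsum
  have := hPmem q hqS
  linarith
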